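/- Let R be a division ring with nonzero central element k, and let T be the noncommutative Sergeev map T(x,y,z) = ((x⁻¹+zy⁻¹)⁻¹, k⁻¹xz, x⁻¹y+z). Then T satisfies the functional tetrahedron equation T¹²³ ∘ T¹⁴⁵ ∘ T²⁴⁶ ∘ T³⁵⁶ = T³⁵⁶ ∘ T²⁴⁶ ∘ T¹⁴⁵ ∘ T¹²³ on R⁶, wherever all expressions are defined. -/
import Mathlib


section SergeevTetrahedron

variable {R : Type*} [DivisionRing R]

/-- The noncommutative Sergeev map with central parameter `k`. -/
def sergeevT (k : R) (p : R × R × R) : R × R × R :=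
  match p with
  | (x, y, z) => ((x⁻¹ + z * y⁻¹)⁻¹, k⁻¹ * x * z, x⁻¹ * y + z)

def app123 (f : R × R × R → R × R × R) (p : R × R × R × R × R × R) :
    R × R × R × R × R × R :=
  match p with
  | (x, y, z, r, s, t) =>
      match f (x, y, z) with
      | (x', y', z') => (x', y', z', r, s, t)

def app145 (f : R × R × R → R × R × R) (p : R × R × R × R × R × R) :
    R × R × R × R × R × R :=
  match p with
  | (x, y, z, r, s, t) =>
      match f (x, r, s) with
      | (x', r', s') => (x', y, z, r', s', t)

def app246 (f : R × R × R → R × R × R) (p : R × R × R × R × R × R) :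
    R × R × R × R × R × R :=
  match p with
  | (x, y, z, r, s, t) =>
      match f (y, r, t) with
      | (y', r', t') => (x, y', z, r', s, t')

def app356 (f : R × R × R → R × R × R) (p : R × R × R × R × R × R) :
    R × R × R × R × R × R :=
  match p with
  | (x, y, z, r, s, t) =>
      match f (z, s, t) with
      | (z', s', t') => (x, y, z', r, s', t')

def sel123 (p : R × R × R × R × R × R) : R × R × R :=
  match p with | (x, y, z, _, _, _) => (x, y, z)
def sel145 (p : R × R × R × R × R × R) : R × R × R :=
  match p with | (x, _, _, r, s, _) => (x, r, s)
def sel246 (p : R × R × R × R × R × R) : R × R × R :=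
  match p with | (_, y, _, r, _, t) => (y, r, t)
def sel356 (p : R × R × R × R × R × R) : R × R × R :=
  match p with | (_, _, z, _, s, t) => (z, s, t)

/-- The Sergeev map is defined at `(x,y,z)` when `x, y, z` and
`x⁻¹ + z·y⁻¹` are invertible. -/
def sergeevDef (p : R × R × R) : Prop :=
  match p with
  | (x, y, z) => x ≠ 0 ∧ y ≠ 0 ∧ z ≠ 0 ∧ x⁻¹ + z * y⁻¹ ≠ 0

/-- The noncommutative Sergeev map satisfies the functional tetrahedron
equation wherever all intermediate expressions are defined. -/
theorem sergeev_tetrahedron (k : R) (hk : k ∈ Set.center R) (hk0 : k ≠ 0)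
    (p : R × R × R × R × R × R)
    (hL1 : sergeevDef (sel356 p))
    (hL2 : sergeevDef (sel246 (app356 (sergeevT k) p)))
    (hL3 : sergeevDef (sel145 (app246 (sergeevT k) (app356 (sergeevT k) p))))
    (hL4 : sergeevDef (sel123 (app145 (sergeevT k)
      (app246 (sergeevT k) (app356 (sergeevT k) p)))))
    (hR1 : sergeevDef (sel123 p))
    (hR2 : sergeevDef (sel145 (app123 (sergeevT k) p)))
    (hR3 : sergeevDef (sel246 (app145 (sergeevT k) (app123 (sergeevT k) p))))
    (hR4 : sergeevDef (sel356 (app246 (sergeevT k)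
      (app145 (sergeevT k) (app123 (sergeevT k) p))))) :
    app123 (sergeevT k) (app145 (sergeevT k)
        (app246 (sergeevT k) (app356 (sergeevT k) p)))
      = app356 (sergeevT k) (app246 (sergeevT k)
        (app145 (sergeevT k) (app123 (sergeevT k) p))) := by
  obtain ⟨x, y, z, r, s, t⟩ := p
  simp only [sergeevT, app123, app145, app246, app356, sel123, sel145, sel246, sel356,
    sergeevDef, inv_inv, Prod.mk.injEq] at *
  obtain ⟨hz, hs, ht, hD1⟩ := hL1
  obtain ⟨hy, hr, ht1, hD2⟩ := hL2
  obtain ⟨hx, hr2, hs1, hD3⟩ := hL3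
  obtain ⟨hx3, hy2, hz1, hD4⟩ := hL4
  obtain ⟨-, -, -, hA⟩ := hR1
  obtain ⟨ha, -, -, hE2⟩ := hR2
  obtain ⟨hb, hr2p, -, hE3⟩ := hR3
  obtain ⟨hc4, hs2p, ht3p, hE4⟩ := hR4
  have hki : ∀ a : R, k⁻¹ * a = a * k⁻¹ := fun a => by
    have h : Commute k a := (Set.mem_center_iff.mp hk).comm a
    exact h.inv_left₀.eq
  set t1 : R := z⁻¹ * s + t with ht1d
  set D1 : R := z⁻¹ + t * s⁻¹ with hD1d
  set s1 : R := k⁻¹ * z * t with hs1d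
  set r2 : R := k⁻¹ * y * t1 with hr2d
  set D2 : R := y⁻¹ + t1 * r⁻¹ with hD2d
  set A : R := x⁻¹ + z * y⁻¹ with hAd
  set X3 : R := x⁻¹ + s1 * r2⁻¹ with hX3d
  set b : R := k⁻¹ * x * z with hbd
  set c : R := x⁻¹ * y + z with hcd
  set r2p : R := k⁻¹ * A⁻¹ * s with hr2pd
  set s2p : R := A * r + s with hs2pd
  set t3p : R := b⁻¹ * r2p + t with ht3pd
  -- basic cancellation facts
  have F1 : D1 = t1 * s⁻¹ := by
    rw [hD1d, ht1d, add_mul, mul_assoc, mul_inv_cancel₀ hs, mul_one]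
  have F2 : D1⁻¹ = s * t1⁻¹ := by rw [F1, mul_inv_rev, inv_inv]
  have F3 : r2⁻¹ = t1⁻¹ * (y⁻¹ * k) := by
    rw [hr2d, mul_inv_rev, mul_inv_rev, inv_inv]
  have F4 : s1 * r2⁻¹ = z * t * (t1⁻¹ * y⁻¹) := by
    rw [hs1d, F3]
    calc k⁻¹ * z * t * (t1⁻¹ * (y⁻¹ * k))
        = k⁻¹ * (z * t * (t1⁻¹ * y⁻¹)) * k := by noncomm_ring
      _ = z * t * (t1⁻¹ * y⁻¹) * k⁻¹ * k := by rw [hki]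
      _ = z * t * (t1⁻¹ * y⁻¹) := by
          rw [mul_assoc (z * t * (t1⁻¹ * y⁻¹)) k⁻¹ k, inv_mul_cancel₀ hk0, mul_one]
  have F5' : z * t + s = z * t1 := by
    rw [ht1d, mul_add, ← mul_assoc, mul_inv_cancel₀ hz, one_mul]
    exact add_comm _ _
  have F5'' : s + z * t = z * t1 := by rw [← F5']; exact add_comm _ _
  have H1 : X3 + D1⁻¹ * D2 = A + s * r⁻¹ := by
    rw [hX3d, F4, F2, hD2d, hAd]
    calc x⁻¹ + z * t * (t1⁻¹ * y⁻¹) + s * t1⁻¹ * (y⁻¹ + t1 * r⁻¹)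
        = x⁻¹ + (z * t + s) * (t1⁻¹ * y⁻¹) + s * (t1⁻¹ * t1) * r⁻¹ := by noncomm_ring
      _ = x⁻¹ + z * t1 * (t1⁻¹ * y⁻¹) + s * r⁻¹ := by
          rw [inv_mul_cancel₀ ht1, mul_one, F5']
      _ = x⁻¹ + z * (t1 * t1⁻¹) * y⁻¹ + s * r⁻¹ := by noncomm_ring
      _ = x⁻¹ + z * y⁻¹ + s * r⁻¹ := by rw [mul_inv_cancel₀ ht1, mul_one]
  have Fb : b⁻¹ = z⁻¹ * (x⁻¹ * k) := by
    rw [hbd, mul_inv_rev, mul_inv_rev, inv_inv]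
  have Fr2p : r2p⁻¹ = s⁻¹ * (A * k) := by
    rw [hr2pd, mul_inv_rev, mul_inv_rev, inv_inv, inv_inv]
  have FDX : D1 * X3 = z⁻¹ * x⁻¹ + t * (s⁻¹ * A) := by
    rw [hD1d, hX3d, F4, hAd]
    calc (z⁻¹ + t * s⁻¹) * (x⁻¹ + z * t * (t1⁻¹ * y⁻¹))
        = z⁻¹ * x⁻¹ + t * (s⁻¹ * x⁻¹) +
            ((z⁻¹ * z) * (t * (t1⁻¹ * y⁻¹)) + t * s⁻¹ * (z * t) * (t1⁻¹ * y⁻¹)) := by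
          noncomm_ring
      _ = z⁻¹ * x⁻¹ + t * (s⁻¹ * x⁻¹) +
            (t * (s⁻¹ * s) * (t1⁻¹ * y⁻¹) + t * s⁻¹ * (z * t) * (t1⁻¹ * y⁻¹)) := by
          rw [inv_mul_cancel₀ hz, inv_mul_cancel₀ hs]; noncomm_ring
      _ = z⁻¹ * x⁻¹ + t * (s⁻¹ * x⁻¹) + t * s⁻¹ * ((s + z * t) * (t1⁻¹ * y⁻¹)) := by
          noncomm_ring
      _ = z⁻¹ * x⁻¹ + t * (s⁻¹ * x⁻¹) + t * s⁻¹ * (z * ((t1 * t1⁻¹) * y⁻¹)) := by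
          rw [F5'']; noncomm_ring
      _ = z⁻¹ * x⁻¹ + t * (s⁻¹ * (x⁻¹ + z * y⁻¹)) := by
          rw [mul_inv_cancel₀ ht1, one_mul]; noncomm_ring
  have FAy : A * y = c := by
    rw [hAd, hcd, add_mul, mul_assoc, inv_mul_cancel₀ hy, mul_one]
  have Fcinv : c⁻¹ = y⁻¹ * A⁻¹ := by rw [← FAy, mul_inv_rev]
  have FzA : z⁻¹ * A = z⁻¹ * x⁻¹ + y⁻¹ := by
    rw [hAd, mul_add, ← mul_assoc, inv_mul_cancel₀ hz, one_mul]
  have key6 : y⁻¹ * A⁻¹ + z⁻¹ * (x⁻¹ * A⁻¹) = z⁻¹ := by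
    calc y⁻¹ * A⁻¹ + z⁻¹ * (x⁻¹ * A⁻¹) = (y⁻¹ + z⁻¹ * x⁻¹) * A⁻¹ := by noncomm_ring
      _ = (z⁻¹ * A) * A⁻¹ := by rw [FzA]; noncomm_ring
      _ = z⁻¹ := by rw [mul_assoc, mul_inv_cancel₀ hA, mul_one]
  have Ft3p : t3p = z⁻¹ * (x⁻¹ * (A⁻¹ * s)) + t := by
    rw [ht3pd, Fb, hr2pd]
    have e : z⁻¹ * (x⁻¹ * k) * (k⁻¹ * A⁻¹ * s)
        = z⁻¹ * (x⁻¹ * ((k * k⁻¹) * (A⁻¹ * s))) := by noncomm_ring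
    rw [e, mul_inv_cancel₀ hk0, one_mul]
  have e6full : y⁻¹ * r + t1 = c⁻¹ * s2p + t3p := by
    rw [hs2pd, Ft3p, Fcinv, ht1d]
    symm
    calc y⁻¹ * A⁻¹ * (A * r + s) + (z⁻¹ * (x⁻¹ * (A⁻¹ * s)) + t)
        = y⁻¹ * ((A⁻¹ * A) * r) +
            (y⁻¹ * (A⁻¹ * s) + z⁻¹ * (x⁻¹ * (A⁻¹ * s))) + t := by noncomm_ring
      _ = y⁻¹ * r + (y⁻¹ * A⁻¹ + z⁻¹ * (x⁻¹ * A⁻¹)) * s + t := by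
          rw [inv_mul_cancel₀ hA, one_mul]; noncomm_ring
      _ = y⁻¹ * r + z⁻¹ * s + t := by rw [key6]
      _ = y⁻¹ * r + (z⁻¹ * s + t) := by exact add_assoc _ _ _
  have F7 : c * (z⁻¹ * x⁻¹) = x⁻¹ * (y * (z⁻¹ * A)) := by
    rw [hcd, hAd]
    have h1 : (x⁻¹ * y + z) * (z⁻¹ * x⁻¹)
        = x⁻¹ * (y * (z⁻¹ * x⁻¹)) + (z * z⁻¹) * x⁻¹ := by noncomm_ring
    have h2 : x⁻¹ * (y * (z⁻¹ * (x⁻¹ + z * y⁻¹)))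
        = x⁻¹ * (y * (z⁻¹ * x⁻¹)) + x⁻¹ * (y * ((z⁻¹ * z) * y⁻¹)) := by noncomm_ring
    rw [h1, h2, mul_inv_cancel₀ hz, inv_mul_cancel₀ hz, one_mul, one_mul,
      mul_inv_cancel₀ hy, mul_one]
  have Fczxa : c * (z⁻¹ * (x⁻¹ * A⁻¹)) = x⁻¹ * (y * z⁻¹) := by
    calc c * (z⁻¹ * (x⁻¹ * A⁻¹)) = (c * (z⁻¹ * x⁻¹)) * A⁻¹ := by noncomm_ring
      _ = x⁻¹ * (y * (z⁻¹ * (A * A⁻¹))) := by rw [F7]; noncomm_ring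
      _ = x⁻¹ * (y * z⁻¹) := by rw [mul_inv_cancel₀ hA, mul_one]
  have FD2r : D2 * r = y⁻¹ * r + t1 := by
    rw [hD2d, add_mul, mul_assoc, inv_mul_cancel₀ hr, mul_one]
  have Fs2pr : s2p * r⁻¹ = A + s * r⁻¹ := by
    rw [hs2pd, add_mul, mul_assoc, mul_inv_cancel₀ hr, mul_one]
  have F8 : (c⁻¹ * s2p + t3p) * s2p⁻¹ = c⁻¹ + t3p * s2p⁻¹ := by
    rw [add_mul, mul_assoc, mul_inv_cancel₀ hs2p, mul_one]
  refine ⟨?_, ?_, ?_, ?_, ?_, ?_⟩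
  · rw [H1]
  · calc k⁻¹ * X3⁻¹ * D1⁻¹ = k⁻¹ * (D1 * X3)⁻¹ := by rw [mul_inv_rev, mul_assoc]
      _ = k⁻¹ * (z⁻¹ * x⁻¹ + t * (s⁻¹ * A))⁻¹ := by rw [FDX]
      _ = ((z⁻¹ * x⁻¹ + t * (s⁻¹ * A)) * k)⁻¹ := by rw [mul_inv_rev]
      _ = (b⁻¹ + t * r2p⁻¹)⁻¹ := by rw [Fb, Fr2p]; congr 1; noncomm_ring
  · calc X3 * D2⁻¹ + D1⁻¹
        = X3 * D2⁻¹ + D1⁻¹ * (D2 * D2⁻¹) := by rw [mul_inv_cancel₀ hD2, mul_one]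
      _ = (X3 + D1⁻¹ * D2) * D2⁻¹ := by noncomm_ring
      _ = (A + s * r⁻¹) * D2⁻¹ := by rw [H1]
      _ = s2p * (r⁻¹ * D2⁻¹) := by rw [← Fs2pr]; noncomm_ring
      _ = s2p * (D2 * r)⁻¹ := by rw [mul_inv_rev]
      _ = s2p * (y⁻¹ * r + t1)⁻¹ := by rw [FD2r]
      _ = s2p * (c⁻¹ * s2p + t3p)⁻¹ := by rw [e6full]
      _ = ((c⁻¹ * s2p + t3p) * s2p⁻¹)⁻¹ := by rw [mul_inv_rev, inv_inv]
      _ = (c⁻¹ + t3p * s2p⁻¹)⁻¹ := by rw [F8]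
  · calc k⁻¹ * x * s1 = k⁻¹ * (x * k⁻¹) * (z * t) := by rw [hs1d]; noncomm_ring
      _ = k⁻¹ * (k⁻¹ * x) * (z * t) := by rw [← hki x]
      _ = k⁻¹ * b * t := by rw [hbd]; noncomm_ring
  · rw [hr2d, hs1d, Ft3p]
    calc x⁻¹ * (k⁻¹ * y * t1) + k⁻¹ * z * t
        = x⁻¹ * k⁻¹ * (y * t1) + k⁻¹ * (z * t) := by noncomm_ring
      _ = k⁻¹ * x⁻¹ * (y * t1) + k⁻¹ * (z * t) := by rw [← hki x⁻¹]
      _ = k⁻¹ * (x⁻¹ * (y * (z⁻¹ * s)) + x⁻¹ * (y * t) + z * t) := by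
          rw [ht1d]; noncomm_ring
      _ = k⁻¹ * ((x⁻¹ * (y * z⁻¹)) * s + (x⁻¹ * y + z) * t) := by noncomm_ring
      _ = k⁻¹ * ((c * (z⁻¹ * (x⁻¹ * A⁻¹))) * s + c * t) := by rw [Fczxa, hcd]
      _ = k⁻¹ * c * (z⁻¹ * (x⁻¹ * (A⁻¹ * s)) + t) := by noncomm_ring
  · exact e6full


end SergeevTetrahedron
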